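/- Let d ≥ 2, ω ∈ ℝ^d, and define N̄ : ℝ^d → ℝ by N̄(r) = Σ_{i=1}^{d−1} (ω_i + r_d^i) r_i + ω_d r_d. If γ ∈ ℝ^d and there exists ε > 0 such that ⟨∇N̄(r), γ⟩ = 0 for all r ∈ ℝ^d with ‖r‖ < ε, then γ = 0 (i.e. N̄ is Rüssmann non-degenerate). -/

import Mathlib

/-!
Along the last axis, `r = t e_d`, the derivative `⟨∇N̄(r), γ⟩` is the polynomial
`c + Σ_i γ_i t^i` in `t`, with `c = ⟨∇N̄(0), γ⟩`; it vanishes for `|t| < ε`, so `γ_1 = ⋯ = γ_{d-1} = 0`.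
Along the first axis, `r = s e_1`, it is `c + s γ_d`, which forces `γ_d = 0`.
-/

open Real Filter Set

noncomputable section

/-- Embedding of the first `d − 1` indices into `Fin d`. -/
def emb (d : ℕ) : Fin (d - 1) → Fin d := Fin.castLE (Nat.sub_le d 1)

/-- The last index of `Fin d`. -/
def lst (d : ℕ) (hd : 0 < d) : Fin d := ⟨d - 1, Nat.sub_lt hd Nat.one_pos⟩

/-- `N̄(r) = Σ_{i=1}^{d−1} (ω_i + r_d^i) r_i + ω_d r_d`. -/
def Nbar (d : ℕ) (hd : 0 < d) (ω : Fin d → ℝ) (r : Fin d → ℝ) : ℝ :=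
  (∑ i : Fin (d - 1), (ω (emb d i) + r (lst d hd) ^ ((i : ℕ) + 1)) * r (emb d i)) +
    ω (lst d hd) * r (lst d hd)

theorem Polynomial.eq_zero_of_forall_sum_mul_pow_eq_zero {R : Type*} [CommRing R] [IsDomain R]
    {n : ℕ} {s : Set R} (hs : s.Infinite) (a : Fin n → R)
    (h : ∀ t ∈ s, ∑ k, a k * t ^ (k : ℕ) = 0) : a = 0 := by
  set p : Polynomial R := ∑ k, C (a k) * X ^ (k : ℕ)
  have hp : p = 0 := eq_zero_of_infinite_isRoot p <| hs.mono fun t ht => by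
    simpa [p, IsRoot, eval_finsetSum] using h t ht
  funext k
  have hcoeff : p.coeff k = a k := by simp [p, Fin.val_inj]
  simpa [hp] using hcoeff.symm

section

variable {d : ℕ} (hd : 0 < d) (ω γ : Fin d → ℝ)

theorem emb_injective : Function.Injective (emb d) := Fin.castLE_injective _

theorem emb_ne_lst (i : Fin (d - 1)) : emb d i ≠ lst d hd := by
  simp [emb, lst, Fin.ext_iff]
  omega

theorem exists_emb_eq_or_eq_lst (j : Fin d) :
    (∃ i, emb d i = j) ∨ j = lst d hd := by
  by_cases hj : (j : ℕ) < d - 1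
  · exact Or.inl ⟨⟨j, hj⟩, Fin.ext rfl⟩
  · exact Or.inr (Fin.ext (by simp [lst]; omega))

theorem fderiv_Nbar_apply (r : Fin d → ℝ) :
    fderiv ℝ (Nbar d hd ω) r γ =
      (∑ i : Fin (d - 1),
        ((ω (emb d i) + r (lst d hd) ^ ((i : ℕ) + 1)) * γ (emb d i)
          + r (emb d i) * (((i : ℕ) + 1) * r (lst d hd) ^ (i : ℕ) * γ (lst d hd))))
        + ω (lst d hd) * γ (lst d hd) := by
  have hproj (j : Fin d) :
      HasFDerivAt (fun r : Fin d → ℝ => r j) (ContinuousLinearMap.proj (R := ℝ) j) r :=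
    hasFDerivAt_apply j r
  have hNbar : HasFDerivAt (Nbar d hd ω) _ r :=
    (HasFDerivAt.fun_sum (u := Finset.univ) fun (i : Fin (d - 1)) _ =>
      (((hasDerivAt_pow ((i : ℕ) + 1) _).comp_hasFDerivAt r (hproj (lst d hd))).const_add
        (ω (emb d i))).mul (hproj (emb d i))).add ((hproj (lst d hd)).const_mul (ω (lst d hd)))
  simp [hNbar.fderiv]

theorem fderiv_Nbar_single_lst_apply (t : ℝ) :
    fderiv ℝ (Nbar d hd ω) (Pi.single (lst d hd) t) γ =
      fderiv ℝ (Nbar d hd ω) 0 γ + ∑ i : Fin (d - 1), γ (emb d i) * t ^ ((i : ℕ) + 1) := by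
  simp only [fderiv_Nbar_apply, Pi.single_eq_same, Pi.single_eq_of_ne (emb_ne_lst hd _),
    Pi.zero_apply, zero_mul, add_zero, ne_eq, Nat.succ_ne_zero, not_false_eq_true, zero_pow,
    add_mul]
  rw [Finset.sum_add_distrib]
  simp only [mul_comm (t ^ _)]
  ring

theorem fderiv_Nbar_single_emb_zero_apply (hd' : 0 < d - 1) (s : ℝ) :
    fderiv ℝ (Nbar d hd ω) (Pi.single (emb d ⟨0, hd'⟩) s) γ =
      fderiv ℝ (Nbar d hd ω) 0 γ + s * γ (lst d hd) := by
  have h_sum : ∑ i : Fin (d - 1), (Pi.single (emb d ⟨0, hd'⟩) s : Fin d → ℝ) (emb d i) *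
      (((i : ℕ) + 1) * (0 : ℝ) ^ (i : ℕ) * γ (lst d hd)) = s * γ (lst d hd) := by
    rw [Fintype.sum_eq_single ⟨0, hd'⟩ fun i hi => by
      simp [Pi.single_eq_of_ne (emb_injective.ne hi)]]
    simp
  simp only [fderiv_Nbar_apply, Pi.single_eq_of_ne (emb_ne_lst hd _).symm,
    Finset.sum_add_distrib, h_sum]
  simp only [Pi.zero_apply, zero_mul, add_zero, ne_eq, Nat.succ_ne_zero, not_false_eq_true, zero_pow,
    Finset.sum_const_zero]
  ring

end

/-- `N̄` is Rüssmann non-degenerate: if `⟨∇N̄(r), γ⟩ = 0` for all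
`r` with `‖r‖ < ε` (for some `ε > 0`), then `γ = 0`.  Here `⟨∇N̄(r), γ⟩` is the
directional derivative of `N̄` at `r` in the direction `γ`. -/
theorem statement19 (d : ℕ) (hd : 2 ≤ d) (ω : Fin d → ℝ) (γ : Fin d → ℝ)
    (h : ∃ ε : ℝ, 0 < ε ∧ ∀ r : Fin d → ℝ, ‖r‖ < ε →
      fderiv ℝ (Nbar d (by omega) ω) r γ = 0) :
    γ = 0 := by
  obtain ⟨ε, hε, h⟩ := h
  have hd0 : 0 < d := by omega
  have hIoo : (Ioo (-ε) ε).Infinite := Ioo_infinite (by linarith)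
  have h_single (j : Fin d) (t : ℝ) (ht : t ∈ Ioo (-ε) ε) :
      fderiv ℝ (Nbar d hd0 ω) (Pi.single j t) γ = 0 :=
    h _ (by rwa [Pi.norm_single, Real.norm_eq_abs, abs_lt])
  have h_emb : ∀ i, γ (emb d i) = 0 := by
    have := Polynomial.eq_zero_of_forall_sum_mul_pow_eq_zero hIoo
      (Fin.cons (fderiv ℝ (Nbar d hd0 ω) 0 γ) (γ ∘ emb d)) fun t ht => by
        simpa [Fin.sum_univ_succ, fderiv_Nbar_single_lst_apply] using h_single (lst d hd0) t ht
    exact fun i => by simpa using congrFun this i.succ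
  have h_lst : γ (lst d hd0) = 0 := by
    have := Polynomial.eq_zero_of_forall_sum_mul_pow_eq_zero hIoo
      ![fderiv ℝ (Nbar d hd0 ω) 0 γ, γ (lst d hd0)] fun t ht => by
        have := h_single (emb d ⟨0, by omega⟩) t ht
        rw [fderiv_Nbar_single_emb_zero_apply] at this
        simpa [mul_comm] using this
    simpa using congrFun this 1
  funext j
  rcases exists_emb_eq_or_eq_lst hd0 j with ⟨i, rfl⟩ | rfl
  · exact h_emb i
  · exact h_lst
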